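/- Let X be a random variable, A an event with P(A) = β ∈ (0,1), and suppose A = {U_X ≤ β} for a uniform transform U_X of X. Then (1/β)·E[X·1_A] = R_{[0,β]}(X) = LES_β(X), i.e., the conditional expectation of X on its lower-β tail event equals the averaged lower quantile. -/

import Mathlib

open MeasureTheory Set Filter Topology ProbabilityTheory

/-- Left `u`-quantile of a random variable `X` under measure `μ`. -/
noncomputable def leftQuantile {Ω : Type*} [MeasurableSpace Ω] (μ : Measure Ω)
    (X : Ω → ℝ) (u : ℝ) : ℝ :=
  sInf {x : ℝ | u ≤ (μ {ω | X ω ≤ x}).toReal}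

/-- Averaged quantile functional `R_I`. -/
noncomputable def avgQuantile {Ω : Type*} [MeasurableSpace Ω] (μ : Measure Ω)
    (X : Ω → ℝ) (I : Set ℝ) : ℝ :=
  (volume I).toReal⁻¹ * ∫ u in I, leftQuantile μ X u

/-! The left quantile function `q` of `X` is the generalized inverse of the distribution
function of `X`, so it is monotone on `(0, 1)` and hence measurable. Since `X = q(U)` a.s.
with `U` uniform on `[0, 1]`, the change of variables `u = U ω` turns the integral of `X`
over `{U ≤ β}` into `∫₀^β q`, and `[0, β]` has length `β`. -/

lemma monotoneOn_sInf_setOf_le {F : ℝ → ℝ} (hF : Monotone F)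
    (hF_bot : Tendsto F atBot (𝓝 0)) (hF_top : Tendsto F atTop (𝓝 1)) :
    MonotoneOn (fun u ↦ sInf {x | u ≤ F x}) (Ioo 0 1) := by
  intro u hu v hv huv
  have hne : {x | v ≤ F x}.Nonempty := (hF_top.eventually_const_le hv.2).exists
  obtain ⟨x₀, hx₀⟩ := (hF_bot.eventually_lt_const hu.1).exists
  have hbdd : BddBelow {x | u ≤ F x} :=
    ⟨x₀, fun y hy ↦ le_of_not_gt fun hyx ↦ (hx₀.trans_le hy).not_ge (hF hyx.le)⟩
  exact csInf_le_csInf hbdd hne fun x hx ↦ huv.trans hx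

section Quantile

variable {Ω : Type*} [MeasurableSpace Ω] {μ : Measure Ω} [IsProbabilityMeasure μ]
  {X : Ω → ℝ}

lemma leftQuantile_eq_sInf_cdf_map (hX : AEMeasurable X μ) (u : ℝ) :
    leftQuantile μ X u = sInf {x | u ≤ cdf (μ.map X) x} := by
  have := Measure.isProbabilityMeasure_map hX
  have hF : ∀ x, (μ {ω | X ω ≤ x}).toReal = cdf (μ.map X) x := fun x ↦ by
    rw [cdf_eq_real, measureReal_def, Measure.map_apply_of_aemeasurable hX measurableSet_Iic]
    rfl
  simp only [leftQuantile, hF]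

lemma monotoneOn_leftQuantile (hX : AEMeasurable X μ) :
    MonotoneOn (leftQuantile μ X) (Ioo 0 1) := by
  rw [show leftQuantile μ X = _ from funext (leftQuantile_eq_sInf_cdf_map hX)]
  exact monotoneOn_sInf_setOf_le (monotone_cdf _) (tendsto_cdf_atBot _) (tendsto_cdf_atTop _)

lemma aemeasurable_leftQuantile (hX : AEMeasurable X μ) :
    AEMeasurable (leftQuantile μ X) (volume.restrict (Icc 0 1)) := by
  rw [← Measure.restrict_congr_set Ioo_ae_eq_Icc]
  exact aemeasurable_restrict_of_monotoneOn measurableSet_Ioo (monotoneOn_leftQuantile hX)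

end Quantile

lemma setIntegral_comp_of_map_eq_uniform {Ω : Type*} [MeasurableSpace Ω] {μ : Measure Ω}
    {U : Ω → ℝ} (hU : μ.map U = volume.restrict (Icc 0 1)) {f : ℝ → ℝ}
    (hf : AEStronglyMeasurable f (volume.restrict (Icc 0 1))) {β : ℝ} (hβ : β ≤ 1) :
    ∫ ω in {ω | U ω ≤ β}, f (U ω) ∂μ = ∫ u in Icc 0 β, f u := by
  have hU_meas : AEMeasurable U μ := .of_map_ne_zero <| by
    rw [hU, Ne, Measure.restrict_eq_zero, Real.volume_Icc]
    norm_num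
  have hIcc : Iic β ∩ Icc 0 1 = Icc 0 β := by
    ext u
    simp only [mem_inter_iff, mem_Iic, mem_Icc]
    grind
  rw [← hU] at hf
  rw [show {ω | U ω ≤ β} = U ⁻¹' Iic β from rfl,
    ← setIntegral_map measurableSet_Iic hf hU_meas, hU,
    Measure.restrict_restrict measurableSet_Iic, hIcc]

theorem stmt16_general {Ω : Type*} [MeasurableSpace Ω] (μ : Measure Ω) [IsProbabilityMeasure μ]
    (X : Ω → ℝ) (hX : Integrable X μ) (β : ℝ) (hβ : β ∈ Set.Ioo (0 : ℝ) 1)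
    (U : Ω → ℝ) (hUlaw : Measure.map U μ = volume.restrict (Set.Icc (0 : ℝ) 1))
    (hUX : ∀ᵐ ω ∂μ, leftQuantile μ X (U ω) = X ω)
    (A : Set Ω) (hA : A = {ω | U ω ≤ β}) :
    (1 / β) * ∫ ω in A, X ω ∂μ = avgQuantile μ X (Set.Icc 0 β) := by
  obtain ⟨hβ0, hβ1⟩ := hβ
  have hX_eq : ∫ ω in A, X ω ∂μ = ∫ ω in A, leftQuantile μ X (U ω) ∂μ :=
    integral_congr_ae <| ae_restrict_of_ae <| hUX.mono fun _ h ↦ h.symm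
  have hq := (aemeasurable_leftQuantile hX.aemeasurable).aestronglyMeasurable
  rw [hX_eq, hA, setIntegral_comp_of_map_eq_uniform hUlaw hq hβ1.le, avgQuantile,
    Real.volume_Icc, sub_zero, ENNReal.toReal_ofReal hβ0.le, one_div]

theorem stmt16 {Ω : Type*} [MeasurableSpace Ω] (μ : Measure Ω) [IsProbabilityMeasure μ]
    (X : Ω → ℝ) (hX : Integrable X μ) (β : ℝ) (hβ : β ∈ Set.Ioo (0 : ℝ) 1)
    (U : Ω → ℝ) (hUlaw : Measure.map U μ = volume.restrict (Set.Icc (0 : ℝ) 1))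
    (hUX : ∀ᵐ ω ∂μ, leftQuantile μ X (U ω) = X ω)
    (A : Set Ω) (hA : A = {ω | U ω ≤ β}) (hPA : (μ A).toReal = β) :
    (1 / β) * ∫ ω in A, X ω ∂μ = avgQuantile μ X (Set.Icc 0 β) :=
  stmt16_general μ X hX β hβ U hUlaw hUX A hA
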